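/- Let e ≥ 1 and a,b ∈ ℕ with 0 ≤ a ≤ q-1, b - ea ≥ 0, and b < q-1. Then the code C_{A,e}(a,b) ⊆ F_q^{q^2} has minimum distance q(q-b). -/
import Mathlib


noncomputable def dualCode (F : Type*) [Field F] {ι : Type*} [Fintype ι]
    (C : Submodule F (ι → F)) : Submodule F (ι → F) where
  carrier := {x | ∀ c ∈ C, ∑ i, x i * c i = 0}
  zero_mem' := by intro c _; simp
  add_mem' := by
    intro x y hx hy c hc
    simp only [Pi.add_apply, add_mul, Finset.sum_add_distrib]
    rw [hx c hc, hy c hc, add_zero]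
  smul_mem' := by
    intro a x hx c hc
    simp only [Pi.smul_apply, smul_eq_mul, mul_assoc, ← Finset.mul_sum]
    rw [hx c hc, mul_zero]

noncomputable def minDist (F : Type*) [Field F] {ι : Type*} [Fintype ι] [DecidableEq F]
    (C : Submodule F (ι → F)) : ℕ :=
  sInf {w | ∃ c ∈ C, c ≠ 0 ∧ hammingNorm c = w}

/-- The weight of a matrix codeword: the number of nonzero entries. -/
noncomputable def wt2 {F : Type*} [Zero F] [DecidableEq F] {ι₁ ι₂ : Type*} [Fintype ι₁]
    [Fintype ι₂] (m : ι₂ → ι₁ → F) : ℕ :=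
  hammingNorm (fun p : ι₂ × ι₁ => m p.1 p.2)

noncomputable def minDist2 (F : Type*) [Field F] [DecidableEq F] {ι₁ ι₂ : Type*} [Fintype ι₁]
    [Fintype ι₂] (C : Submodule F (ι₂ → ι₁ → F)) : ℕ :=
  sInf {w | ∃ m ∈ C, m ≠ 0 ∧ wt2 m = w}

noncomputable def dualCode2 (F : Type*) [Field F] {ι₁ ι₂ : Type*} [Fintype ι₁] [Fintype ι₂]
    (C : Submodule F (ι₂ → ι₁ → F)) : Submodule F (ι₂ → ι₁ → F) where
  carrier := {x | ∀ c ∈ C, ∑ i, ∑ j, x i j * c i j = 0}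
  zero_mem' := by intro c _; simp
  add_mem' := by
    intro x y hx hy c hc
    simp only [Pi.add_apply, add_mul, Finset.sum_add_distrib]
    rw [hx c hc, hy c hc, add_zero]
  smul_mem' := by
    intro a x hx c hc
    simp only [Pi.smul_apply, smul_eq_mul, mul_assoc, ← Finset.mul_sum]
    rw [hx c hc, mul_zero]

/-- The affine Reed–Solomon code `RS_q(k)`: evaluations of polynomials of degree `< k` at
all elements of `F`.  By convention it is `{0}` for `k ≤ 0` and the full space for `k ≥ q`. -/
noncomputable def RS (F : Type*) [Field F] (k : ℤ) : Submodule F (F → F) :=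
  (Polynomial.degreeLT F k.toNat).map
    (LinearMap.pi fun α : F => (Polynomial.aeval α).toLinearMap)

/-- The linear map `c ↦ v ⊗ c`, sending a word `c` to the matrix `(v i * c j)_{i,j}`. -/
noncomputable def vTensor (F : Type*) [Field F] {ι₁ ι₂ : Type*} (v : ι₁ → F) :
    (ι₂ → F) →ₗ[F] (ι₁ → ι₂ → F) where
  toFun c := fun i j => v i * c j
  map_add' c d := by funext i j; simp [mul_add]
  map_smul' a c := by funext i j; simp only [Pi.smul_apply, smul_eq_mul, RingHom.id_apply]; ring

/-- The code `C_{𝔸,e}(a,b) = Σ_{d=0}^{a} ⟨(α^d)_α⟩ ⊗ RS_q(b - ed + 1) ⊆ F^{q²}`,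
the evaluation code on the affine chart of the Hirzebruch surface `H_e`.  A codeword is a
matrix indexed by `F × F`, the entry at `(α, β)` being `α^d · f(β)`. -/
noncomputable def CA (F : Type*) [Field F] (e a b : ℕ) : Submodule F (F → F → F) :=
  ⨆ d ∈ Finset.Iic a, (RS F ((b : ℤ) - e * d + 1)).map (vTensor F fun α : F => α ^ d)


open Polynomial Finset in


theorem helper_nonroots {F : Type*} [Field F] [Fintype F] [DecidableEq F] (p : F[X]) (hp : p ≠ 0) (n : ℕ) (hd : p.natDegree ≤ n) :
    Fintype.card F - n ≤ (Finset.univ.filter fun α => p.eval α ≠ 0).card := by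
  have h1 : (Finset.univ.filter fun α => p.eval α = 0).card ≤ n := by
    refine le_trans ?_ (le_trans (Multiset.toFinset_card_le p.roots) (le_trans p.card_roots' hd))
    apply Finset.card_le_card
    intro x hx
    simp only [Finset.mem_filter] at hx
    simp [Multiset.mem_toFinset, Polynomial.mem_roots hp, Polynomial.IsRoot, hx.2]
  have h2 := Finset.card_filter_add_card_filter_not (s := (Finset.univ : Finset F))
    (p := fun α => p.eval α = 0)
  rw [Finset.card_univ] at h2
  simp only [ne_eq]
  omega

open Polynomial Finset in
theorem lower_core {F : Type*} [Field F] [Fintype F] [DecidableEq F] (q e a b : ℕ) (hq : Fintype.card F = q)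
    (he : 1 ≤ e) (haq : a ≤ q - 1) (hb : e * a ≤ b) (hbq : b < q - 1)
    (f : ℕ → F[X]) (hdeg : ∀ d, (f d).degree < (((b : ℤ) - e * d + 1).toNat : ℕ))
    (hne : ∃ d ∈ Finset.Iic a, f d ≠ 0) :
    q * (q - b) ≤
      ∑ β : F, (Finset.univ.filter fun α => (∑ d ∈ Finset.Iic a, α ^ d * (f d).eval β) ≠ 0).card := by
  classical
  set S := (Finset.Iic a).filter (fun d => f d ≠ 0) with hS
  have hSne : S.Nonempty := by
    obtain ⟨d, hd1, hd2⟩ := hne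
    exact ⟨d, by simp [hS, Finset.mem_filter, hd1, hd2]⟩
  set D := S.max' hSne with hD
  have hDS : D ∈ S := S.max'_mem hSne
  have hDa : D ≤ a := by simpa using (Finset.mem_filter.mp hDS).1
  have hfD : f D ≠ 0 := (Finset.mem_filter.mp hDS).2
  have hmax : ∀ d, D < d → d ≤ a → f d = 0 := by
    intro d hd1 hd2
    by_contra hfd
    exact absurd (S.le_max' d (by simp [hS, Finset.mem_filter, hd2, hfd])) (by omega)
  have heD : e * D ≤ b := le_trans (Nat.mul_le_mul_left e hDa) hb
  -- degree bound for f D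
  have htoNat : (((b : ℤ) - e * D + 1).toNat : ℕ) = b - e * D + 1 := by
    have : ((b : ℤ) - e * D + 1) = ((b - e * D + 1 : ℕ) : ℤ) := by
      push_cast [Nat.cast_sub heD]; ring
    rw [this, Int.toNat_natCast]
  have hnd : (f D).natDegree ≤ b - e * D := by
    have := hdeg D
    rw [htoNat] at this
    have := (Polynomial.natDegree_lt_iff_degree_lt hfD).mpr (by exact_mod_cast this)
    omega
  -- good columns
  set B := (Finset.univ.filter fun β => (f D).eval β ≠ 0) with hB
  have hBcard : q - (b - e * D) ≤ B.card := by
    rw [← hq]; exact helper_nonroots (f D) hfD _ hnd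
  -- per-column bound
  have hcol : ∀ β ∈ B, q - D ≤
      (Finset.univ.filter fun α => (∑ d ∈ Finset.Iic a, α ^ d * (f d).eval β) ≠ 0).card := by
    intro β hβ
    have hβ' : (f D).eval β ≠ 0 := by simpa [hB] using hβ
    set cp : F[X] := ∑ d ∈ Finset.Iic D, Polynomial.C ((f d).eval β) * Polynomial.X ^ d with hcp
    have claim1 : ∀ α, cp.eval α = ∑ d ∈ Finset.Iic a, α ^ d * (f d).eval β := by
      intro α
      rw [hcp]
      rw [Polynomial.eval_finset_sum]
      rw [← Finset.sum_subset (Finset.Iic_subset_Iic.mpr hDa)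
        (fun d hd hd2 => by
          rw [hmax d (by simp at hd2 hd; omega) (by simpa using hd), Polynomial.eval_zero,
            mul_zero])]
      exact Finset.sum_congr rfl fun d _ => by
        rw [Polynomial.eval_mul, Polynomial.eval_C, Polynomial.eval_pow, Polynomial.eval_X,
          mul_comm]
    have hcoeff : cp.coeff D = (f D).eval β := by
      rw [hcp, Polynomial.finset_sum_coeff]
      simp only [Polynomial.coeff_C_mul, Polynomial.coeff_X_pow, mul_ite, mul_one, mul_zero]
      rw [Finset.sum_ite_eq]
      simp
    have claim2 : cp ≠ 0 := fun h => hβ' (by rw [← hcoeff, h, Polynomial.coeff_zero])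
    have claim3 : cp.natDegree ≤ D := by
      apply Polynomial.natDegree_le_iff_degree_le.mpr
      refine le_trans (Polynomial.degree_sum_le _ _) ?_
      apply Finset.sup_le
      intro d hd
      exact le_trans (Polynomial.degree_C_mul_X_pow_le _ _)
        (by exact_mod_cast Nat.cast_le.mpr (Finset.mem_Iic.mp hd))
    have := helper_nonroots cp claim2 D claim3
    rw [hq] at this
    refine le_trans this (le_of_eq (congrArg Finset.card (Finset.filter_congr ?_)))
    intro α _
    rw [claim1 α]
  -- assemble
  have step1 : ∑ β ∈ B, (q - D) ≤
      ∑ β ∈ B, (Finset.univ.filter fun α => (∑ d ∈ Finset.Iic a, α ^ d * (f d).eval β) ≠ 0).card :=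
    Finset.sum_le_sum hcol
  have step2 : (∑ β ∈ B, (Finset.univ.filter fun α =>
        (∑ d ∈ Finset.Iic a, α ^ d * (f d).eval β) ≠ 0).card) ≤
      ∑ β : F, (Finset.univ.filter fun α => (∑ d ∈ Finset.Iic a, α ^ d * (f d).eval β) ≠ 0).card :=
    Finset.sum_le_sum_of_subset (Finset.subset_univ B)
  rw [Finset.sum_const, smul_eq_mul] at step1
  refine le_trans ?_ (le_trans step1 step2)
  have harith : q * (q - b) ≤ (q - (b - e * D)) * (q - D) := by
    have hq2 : 2 ≤ q := by omega
    have hbq' : b < q := by omega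
    have hDq : D ≤ q := by omega
    have huq : b - e * D ≤ q := by omega
    zify [le_of_lt hbq', hDq, huq, heD]
    have h1 : (D : ℤ) ≤ (e : ℤ) * D := by
      have : (1 : ℤ) ≤ e := by exact_mod_cast he
      nlinarith [Int.natCast_nonneg D]
    nlinarith [Int.natCast_nonneg D, Int.natCast_nonneg q, Int.natCast_nonneg b,
      Int.natCast_nonneg e, mul_nonneg (Int.natCast_nonneg q) (sub_nonneg.mpr h1),
      mul_nonneg (sub_nonneg.mpr (show (e:ℤ)*D ≤ b by exact_mod_cast heD)) (Int.natCast_nonneg D)]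
  exact le_trans harith (Nat.mul_le_mul_right (q - D) hBcard)


open Polynomial Finset in
theorem wt2_colsum {F : Type*} [Field F] [Fintype F] [DecidableEq F] (m : F → F → F) :
    wt2 m = ∑ β : F, (Finset.univ.filter fun α => m α β ≠ 0).card := by
  simp only [wt2, hammingNorm, Finset.card_filter]
  rw [Fintype.sum_prod_type, Finset.sum_comm]

open Polynomial Finset in
theorem CA_rep {F : Type*} [Field F] (e a b : ℕ) (m : F → F → F) (hm : m ∈ CA F e a b) :
    ∃ f : ℕ → F[X], (∀ d, (f d).degree < (((b : ℤ) - e * d + 1).toNat : ℕ)) ∧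
      ∀ α β, m α β = ∑ d ∈ Finset.Iic a, α ^ d * (f d).eval β := by
  rw [CA, Submodule.mem_iSup_finset_iff_exists_sum] at hm
  obtain ⟨μ, hμ⟩ := hm
  have h : ∀ d : ℕ, ∃ g : F[X], g.degree < (((b : ℤ) - e * d + 1).toNat : ℕ) ∧
      ∀ α β : F, (μ d : F → F → F) α β = α ^ d * g.eval β := by
    intro d
    obtain ⟨c, hc, hc2⟩ := (μ d).2
    obtain ⟨g, hg, hg2⟩ := hc
    refine ⟨g, Polynomial.mem_degreeLT.mp hg, fun α β => ?_⟩
    rw [← hc2, ← hg2]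
    simp [vTensor, LinearMap.pi_apply]
  choose f hf1 hf2 using h
  refine ⟨f, hf1, fun α β => ?_⟩
  rw [← hμ]
  simp only [Finset.sum_apply]
  exact Finset.sum_congr rfl fun d _ => hf2 d α β

open Polynomial Finset in
theorem CA_upper {F : Type*} [Field F] [Fintype F] [DecidableEq F] (q e a b : ℕ)
    (hq : Fintype.card F = q) (hbq : b < q - 1) :
    ∃ m ∈ CA F e a b, m ≠ 0 ∧ wt2 m = q * (q - b) := by
  classical
  have hbq' : b ≤ q := by omega
  obtain ⟨S, -, hScard⟩ := Finset.exists_subset_card_eq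
    (show b ≤ (Finset.univ : Finset F).card by rw [Finset.card_univ, hq]; exact hbq')
  set g : F[X] := ∏ γ ∈ S, (Polynomial.X - Polynomial.C γ) with hg
  have heval : ∀ β : F, g.eval β = 0 ↔ β ∈ S := by
    intro β
    rw [hg, Polynomial.eval_prod]
    simp only [Polynomial.eval_sub, Polynomial.eval_X, Polynomial.eval_C]
    rw [Finset.prod_eq_zero_iff]
    constructor
    · rintro ⟨γ, hγ, hγ2⟩
      rwa [show β = γ by linear_combination hγ2]
    · intro hβ
      exact ⟨β, hβ, sub_self β⟩
  have hdegg : g.natDegree = b := by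
    rw [hg, Polynomial.natDegree_prod _ _ (fun γ _ => Polynomial.X_sub_C_ne_zero γ)]
    simp [Polynomial.natDegree_X_sub_C, hScard]
  set m : F → F → F := (vTensor F fun α : F => α ^ (0 : ℕ)) (fun β => g.eval β) with hm
  have hmval : ∀ α β : F, m α β = g.eval β := by
    intro α β
    simp [hm, vTensor]
  have hmem : m ∈ CA F e a b := by
    rw [hm, CA]
    apply Submodule.mem_iSup_of_mem 0
    apply Submodule.mem_iSup_of_mem (Finset.mem_Iic.mpr (Nat.zero_le a))
    apply Submodule.mem_map_of_mem
    rw [RS]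
    refine Submodule.mem_map.mpr ⟨g, ?_, ?_⟩
    · rw [Polynomial.mem_degreeLT]
      have h0 : (((b : ℤ) - e * (0 : ℕ) + 1).toNat : ℕ) = b + 1 := by simp
      rw [h0]
      refine lt_of_le_of_lt Polynomial.degree_le_natDegree ?_
      rw [hdegg]
      exact_mod_cast Nat.lt_succ_self b
    · funext β
      simp [LinearMap.pi_apply]
  have hSne : ∃ β : F, β ∉ S := by
    by_contra h
    push_neg at h
    have : (Finset.univ : Finset F).card ≤ S.card := Finset.card_le_card fun x _ => h x
    rw [Finset.card_univ, hq, hScard] at this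
    omega
  obtain ⟨β0, hβ0⟩ := hSne
  have hm0 : m ≠ 0 := by
    intro h
    apply hβ0
    apply (heval β0).mp
    rw [← hmval β0 β0, h]
    rfl
  refine ⟨m, hmem, hm0, ?_⟩
  rw [wt2_colsum]
  have hcols : ∀ β : F, (Finset.univ.filter fun α => m α β ≠ 0).card =
      if β ∈ S then 0 else q := by
    intro β
    by_cases hβ : β ∈ S
    · rw [if_pos hβ]
      have : ∀ α : F, m α β = 0 := fun α => by rw [hmval, (heval β).mpr hβ]
      simp [this]
    · rw [if_neg hβ]
      have hgβ : g.eval β ≠ 0 := fun h => hβ ((heval β).mp h)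
      have : (Finset.univ.filter fun α : F => m α β ≠ 0) = Finset.univ := by
        apply Finset.filter_true_of_mem
        intro α _
        rw [hmval]
        exact hgβ
      rw [this, Finset.card_univ, hq]
  simp only [hcols]
  rw [Finset.sum_ite, Finset.sum_const, Finset.sum_const, smul_eq_mul, smul_eq_mul, mul_zero,
    zero_add]
  have h3 : (Finset.univ.filter fun β : F => β ∈ S).card = b := by
    rw [Finset.filter_mem_eq_inter, Finset.univ_inter, hScard]
  have h2 := Finset.card_filter_add_card_filter_not (s := (Finset.univ : Finset F))
    (p := fun β : F => β ∈ S)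
  rw [Finset.card_univ, hq, h3] at h2
  have h4 : (Finset.univ.filter fun β : F => ¬ β ∈ S).card = q - b := by omega
  rw [h4, Nat.mul_comm]

/-- for `e ≥ 1`, `0 ≤ a ≤ q-1`, `b - ea ≥ 0` and `b < q - 1`, the code
`C_{𝔸,e}(a,b) ⊆ F^{q²}` has minimum distance `q(q - b)`. -/
theorem CA_minDist_low (F : Type*) [Field F] [Fintype F] [DecidableEq F] (q e a b : ℕ)
    (hq : Fintype.card F = q) (he : 1 ≤ e) (ha : a ≤ q - 1) (hb : e * a ≤ b)
    (hbq : b < q - 1) :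
    minDist2 F (CA F e a b) = q * (q - b) := by
  classical
  obtain ⟨m, hmem, hm0, hwt⟩ := CA_upper q e a b hq hbq
  have hmemS : q * (q - b) ∈ {w | ∃ m ∈ CA F e a b, m ≠ 0 ∧ wt2 m = w} := ⟨m, hmem, hm0, hwt⟩
  refine le_antisymm (Nat.sInf_le hmemS) (le_csInf ⟨_, hmemS⟩ ?_)
  rintro w ⟨m', hm', hm0', rfl⟩
  obtain ⟨f, hdeg, hrep⟩ := CA_rep e a b m' hm'
  have hne : ∃ d ∈ Finset.Iic a, f d ≠ 0 := by
    by_contra h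
    push_neg at h
    apply hm0'
    funext α β
    rw [hrep α β, Finset.sum_congr rfl fun d hd => by
      rw [h d hd, Polynomial.eval_zero, mul_zero]]
    simp
  rw [wt2_colsum]
  have hcong : (∑ β : F, (Finset.univ.filter fun α => m' α β ≠ 0).card) =
      ∑ β : F, (Finset.univ.filter fun α =>
        (∑ d ∈ Finset.Iic a, α ^ d * (f d).eval β) ≠ 0).card := by
    refine Finset.sum_congr rfl fun β _ => congrArg Finset.card (Finset.filter_congr ?_)
    intro α _
    rw [hrep α β]
  rw [hcong]
  exact lower_core q e a b hq he ha hb hbq f hdeg hne
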